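/- The Schubert polynomials (𝔖_w), indexed by all finitely supported permutations w of {1,2,…}, form a ℤ-basis of Poly = ℤ[x₁,x₂,…]; moreover, for each d ≥ 0, the subfamily {𝔖_w : Des(w) ⊆ {1,…,d}} is a ℤ-basis of the subring ℤ[x₁,…,x_d]. -/

import Mathlib

/-
Conventions: `Pol = MvPolynomial ℕ ℤ` with the Lean variable `X i` representing
the paper's variable `x_{i+1}` (0-indexed).  All operators carrying a paper index
`i ≥ 1` are represented by Lean operators indexed by `i : ℕ` (Lean `i` ↔ paper `i+1`),
and sequences of positive integers are represented by sequences of natural numbers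
(entry `v` ↔ paper entry `v+1`).
-/

open MvPolynomial
open scoped Classical

abbrev Pol := MvPolynomial ℕ ℤ

noncomputable section

/-- Interchange the variables `x_{i+1}` and `x_{i+2}` (paper indexing). -/
def swapVar (i : ℕ) (f : Pol) : Pol := rename (Equiv.swap i (i+1)) f

/-- Exact division: the unique `g` with `d * g = f` when it exists (`0` otherwise). -/
def exactDiv (d f : Pol) : Pol := if h : ∃ g : Pol, d * g = f then h.choose else 0

/-- The divided difference operator `∂_{i+1}` (paper indexing). -/
def ddiff (i : ℕ) (f : Pol) : Pol := exactDiv (X i - X (i+1)) (f - swapVar i f)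

/-- The Bergeron–Sottile operator `R_{i+1}` (paper indexing): `x_j ↦ x_j` for
`j < i+1`, `x_{i+1} ↦ 0`, `x_j ↦ x_{j-1}` for `j > i+1`. -/
def BS (i : ℕ) : Pol →ₐ[ℤ] Pol :=
  aeval fun j => if j < i then X j else if j = i then 0 else X (j-1)

/-- `m`-fold iterate of `BS i`. -/
def BSit (i m : ℕ) (f : Pol) : Pol := (fun g => BS i g)^[m] f

/-- `Z g = Σ_{k ≥ 0} R₁ᵏ g`. -/
def Zop (f : Pol) : Pol := ∑ᶠ k : ℕ, BSit 0 k f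

/-- `Z^{(m)} g = Σ_{k ≥ 0} R₁^{km} g`. -/
def Zm (m : ℕ) (f : Pol) : Pol := ∑ᶠ k : ℕ, BSit 0 (k * m) f

/-- The truncation operator keeping the first `n` variables: `Π_n` in paper indexing. -/
def truncOp (n : ℕ) : Pol →ₐ[ℤ] Pol := aeval fun j => if j < n then X j else 0

/-- The quasisymmetric divided difference `T_{i+1}` defined as the exact quotient
`((R_{i+2} - R_{i+1})f)/x_{i+1}` (paper indexing). -/
def TqDiv (i : ℕ) (f : Pol) : Pol := exactDiv (X i) (BS (i+1) f - BS i f)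

/-- The quasisymmetric divided difference `T_{i+1} = R_{i+1} ∘ ∂_{i+1}` (paper indexing). -/
def Tq (i : ℕ) (f : Pol) : Pol := BS i (ddiff i f)

/-- The `m`-quasisymmetric divided difference `T^{(m)}_{i+1}` (paper indexing). -/
def Tm (m i : ℕ) (f : Pol) : Pol := exactDiv (X i) (BSit (i+1) m f - BSit i m f)

/-- The slide extractor `D_{i+1} = Π_{i+1} ∘ ∂_{i+1}` (paper indexing). -/
def Dop (i : ℕ) (f : Pol) : Pol := truncOp (i+1) (ddiff i f)

/-- The `m`-slide extractor `D^{(m)}_{i+1} = Π_{i+1} ∘ T^{(m)}_{i+1}` (paper indexing). -/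
def Dm (m i : ℕ) (f : Pol) : Pol := truncOp (i+1) (Tm m i f)

/-- The slide creator `B_{i+1} f = Σ_{k=1}^{i+1} x_k · R_k^{i+1-k}(Π_{i+1} f)` (paper indexing). -/
def Bop (i : ℕ) (f : Pol) : Pol :=
  ∑ k ∈ Finset.range (i+1), X k * BSit k (i - k) (truncOp (i+1) f)

/-- The creation operator `Z ∘ x_{i+1} ∘ R_{i+1}` (paper indexing). -/
def crea (i : ℕ) (f : Pol) : Pol := Zop (X i * BS i f)

/-- A permutation of `{0,1,2,…}` is finitely supported if it fixes all but
finitely many points. -/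
def FinSupp (w : Equiv.Perm ℕ) : Prop := Set.Finite {x | w x ≠ x}

/-- Coxeter length: the minimal `k` such that `w` is a product of `k` simple
transpositions. -/
def len (w : Equiv.Perm ℕ) : ℕ :=
  sInf {k | ∃ l : List ℕ, l.length = k ∧ (l.map fun i => Equiv.swap i (i+1)).prod = w}

/-- The set of reduced words for `w`. -/
def Red (w : Equiv.Perm ℕ) : Set (List ℕ) :=
  {l | l.length = len w ∧ (l.map fun i => Equiv.swap i (i+1)).prod = w}

/-- A family of polynomials indexed by permutations is a family of Schubert
polynomials if: each member is homogeneous of degree the length, the identity is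
sent to `1`, and divided differences act as expected (all this for finitely
supported permutations). -/
def IsSchubertFamily (S : Equiv.Perm ℕ → Pol) : Prop :=
  (∀ w, FinSupp w → (S w).IsHomogeneous (len w)) ∧
  S 1 = 1 ∧
  ∀ w, FinSupp w → ∀ i : ℕ,
    ddiff i (S w) = if w (i+1) < w i then S (w * Equiv.swap i (i+1)) else 0

/-- `b` is a compatible sequence for `a`. -/
def Compat {k : ℕ} (a b : Fin k → ℕ) : Prop :=
  Monotone b ∧ (∀ j, b j ≤ a j) ∧
  ∀ (j : ℕ) (h : j + 1 < k),
    a ⟨j, Nat.lt_of_succ_lt h⟩ < a ⟨j+1, h⟩ → b ⟨j, Nat.lt_of_succ_lt h⟩ < b ⟨j+1, h⟩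

/-- The slide polynomial `𝔉_a`, as the sum of the monomials of all compatible
sequences for `a`. -/
def slide {k : ℕ} (a : Fin k → ℕ) : Pol :=
  ∑ᶠ b ∈ {b : Fin k → ℕ | Compat a b}, ∏ j, X (b j)

/-- `b` is an `m`-compatible sequence for `a` (entrywise congruent mod `m`). -/
def MCompat (m : ℕ) {k : ℕ} (a b : Fin k → ℕ) : Prop :=
  Monotone b ∧ (∀ j, b j ≤ a j ∧ b j % m = a j % m) ∧
  ∀ (j : ℕ) (h : j + 1 < k),
    a ⟨j, Nat.lt_of_succ_lt h⟩ < a ⟨j+1, h⟩ → b ⟨j, Nat.lt_of_succ_lt h⟩ < b ⟨j+1, h⟩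

/-- The `m`-slide polynomial `𝔉ᵐ_a`. -/
def mslide (m : ℕ) {k : ℕ} (a : Fin k → ℕ) : Pol :=
  ∑ᶠ b ∈ {b : Fin k → ℕ | MCompat m a b}, ∏ j, X (b j)

/-- Value of the `m`-slide creator `B^{(m)}_{a+1}` (paper indexing) on the monomial with
exponent vector `d`. -/
def BmMono (m a : ℕ) (d : ℕ →₀ ℕ) : Pol :=
  if ∃ t, a < t ∧ d t ≠ 0 then 0
  else monomial (d.erase a) 1 *
    ∑ r ∈ Finset.range (a+1),
      if r * m ≤ a ∧ ∀ t, t < a → d t ≠ 0 → t < a - r * m then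
        X (a - r * m) ^ (d a + 1) else 0

/-- The `m`-slide creator `B^{(m)}_{a+1}` (paper indexing), extended linearly from
its values on monomials. -/
def Bm (m a : ℕ) (f : Pol) : Pol := ∑ d ∈ f.support, C (f.coeff d) * BmMono m a d

end

/-!
Each Schubert polynomial is unitriangular with respect to monomials indexed by Lehmer codes:
`𝔖_w` has coefficient `1` at `x^{c(w)}`, and every exponent `m` occurring in `𝔖_w` has all tail
sums `∑_{j ≥ t} m_j` bounded by those of `c(w)`, hence `m ≤ c(w)` colexicographically. Both facts
follow by induction along descents: past its last descent `𝔖_w` is symmetric, so a coefficient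
of `𝔖_w` telescopes, moving the last block of the exponent to the right, into coefficients of
`(x_i - x_{i+1}) ∂_i 𝔖_w = (x_i - x_{i+1}) 𝔖_{w s_i}`. Since `w ↦ c(w)` is a bijection onto
finitely supported sequences, and `c(w)` vanishes from `d` on exactly when all descents of `w`
are below `d`, unitriangularity gives both bases.
-/

open Finsupp (single)

section DividedDifference

lemma dvd_sub_swapVar (i : ℕ) (f : Pol) : (X i - X (i+1) : Pol) ∣ f - swapVar i f := by
  induction f using MvPolynomial.induction_on with
  | C a => simp [swapVar]
  | add p q hp hq =>
    have h : p + q - swapVar i (p + q) = (p - swapVar i p) + (q - swapVar i q) := by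
      simp only [swapVar, map_add]; ring
    exact h ▸ dvd_add hp hq
  | mul_X p n hp =>
    have h : p * X n - swapVar i (p * X n)
        = (p - swapVar i p) * X n + swapVar i p * (X n - X (Equiv.swap i (i+1) n)) := by
      simp only [swapVar, map_mul, rename_X]; ring
    rw [h]
    refine dvd_add (hp.mul_right _) (Dvd.dvd.mul_left ?_ _)
    rw [Equiv.swap_apply_def]
    split_ifs with h1 h2
    · exact h1 ▸ dvd_refl _
    · exact ⟨-1, by rw [h2]; ring⟩
    · simp

lemma X_sub_X_succ_mul_ddiff (i : ℕ) (f : Pol) :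
    (X i - X (i+1)) * ddiff i f = f - swapVar i f := by
  have h : ∃ g : Pol, (X i - X (i+1)) * g = f - swapVar i f := by
    obtain ⟨g, hg⟩ := dvd_sub_swapVar i f
    exact ⟨g, hg.symm⟩
  rw [ddiff, exactDiv, dif_pos h]
  exact h.choose_spec

lemma swapVar_eq_self_of_ddiff_eq_zero {i : ℕ} {f : Pol} (h : ddiff i f = 0) :
    swapVar i f = f := by
  have := X_sub_X_succ_mul_ddiff i f
  rw [h, mul_zero, eq_comm, sub_eq_zero] at this
  exact this.symm

lemma mem_supported_of_swapVar_eq_self {f : Pol} {n : ℕ}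
    (h : ∀ i, n ≤ i → swapVar i f = f) : f ∈ supported ℤ (Set.Iio n) := by
  rw [mem_supported]
  intro k hk
  by_contra hkn
  set K := f.vars.max' ⟨k, hk⟩
  have hKn : n ≤ K := (not_lt.mp hkn).trans (f.vars.le_max' k hk)
  -- `K` is the largest variable of `f`, but `f = s_K f` makes `K + 1` a variable too
  have hK : K ∈ (swapVar K f).vars := by rw [h K hKn]; exact f.vars.max'_mem ⟨k, hk⟩
  obtain ⟨j, hj, hjK⟩ := mem_vars_rename (Equiv.swap K (K+1)) f hK
  have : j = K + 1 := by
    rw [← Equiv.swap_apply_self K (K+1) j, hjK, Equiv.swap_apply_left]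
  have := f.vars.le_max' j hj
  omega

lemma eq_zero_of_mem_support_of_mem_supported {f : Pol} {n : ℕ}
    (hf : f ∈ supported ℤ (Set.Iio n)) {m : ℕ →₀ ℕ} (hm : m ∈ f.support) {j : ℕ}
    (hj : n ≤ j) : m j = 0 := by
  by_contra hmj
  have := (mem_supported.mp hf) ((mem_vars_iff_mem_support j).mpr ⟨m, hm, by simpa using hmj⟩)
  exact absurd (Set.mem_Iio.mp this) (not_lt.mpr hj)

end DividedDifference

section Telescoping

lemma coeff_add_single_swapVar {m₀ : ℕ →₀ ℕ} {i : ℕ} (h0 : m₀ i = 0) (h1 : m₀ (i+1) = 0)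
    (a : ℕ) (f : Pol) :
    coeff (m₀ + single i a) (swapVar i f) = coeff (m₀ + single (i+1) a) f := by
  have hm₀ : Finsupp.mapDomain (Equiv.swap i (i+1)) m₀ = m₀ := by
    conv_rhs => rw [← Finsupp.mapDomain_id (v := m₀)]
    refine Finsupp.mapDomain_congr fun x hx => Equiv.swap_apply_of_ne_of_ne ?_ ?_ <;>
      rintro rfl <;> simp_all
  have : Finsupp.mapDomain (Equiv.swap i (i+1)) (m₀ + single (i+1) a) = m₀ + single i a := by
    rw [Finsupp.mapDomain_add, Finsupp.mapDomain_single, Equiv.swap_apply_right, hm₀]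
  rw [← this, swapVar, coeff_rename_mapDomain _ (Equiv.injective _)]

/-- Telescoping: the coefficient of `s_i f` at `m₀ + a e_i` is that of `f` at `m₀ + a e_{i+1}`,
and the block `a` eventually leaves the variables of `f`. -/
lemma coeff_eq_sum_coeff_sub_swapVar {f : Pol} {N : ℕ} (hf : f ∈ supported ℤ (Set.Iio N))
    {m₀ : ℕ →₀ ℕ} {L a : ℕ} (hm₀ : ∀ j, L ≤ j → m₀ j = 0) (ha : a ≠ 0) :
    coeff (m₀ + single L a) f =
      ∑ t ∈ Finset.range N, coeff (m₀ + single (L+t) a) (f - swapVar (L+t) f) := by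
  have hlast : coeff (m₀ + single (L+N) a) f = 0 := by
    by_contra h
    have := eq_zero_of_mem_support_of_mem_supported hf (mem_support_iff.mpr h) (j := L+N)
      (by omega)
    simp [hm₀ (L+N) (by omega), ha] at this
  rw [Finset.sum_congr rfl fun t _ => by
    rw [coeff_sub, coeff_add_single_swapVar (hm₀ _ (by omega)) (hm₀ _ (by omega))]]
  have := Finset.sum_range_sub' (fun t => coeff (m₀ + single (L+t) a) f) N
  simpa [hlast, add_assoc] using this.symm

lemma coeff_add_single_X_sub_X_succ_mul {μ : ℕ →₀ ℕ} {i : ℕ} (h : μ (i+1) = 0) (g : Pol) :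
    coeff (μ + single i 1) ((X i - X (i+1)) * g) = coeff μ g := by
  rw [sub_mul, coeff_sub, add_comm, coeff_X_mul, coeff_X_mul', if_neg, sub_zero]
  simp [h]

end Telescoping

section TailSum

noncomputable def tailSum (t : ℕ) (m : ℕ →₀ ℕ) : ℕ := (m.filter (t ≤ ·)).degree

@[simp]
lemma tailSum_zero_right (t : ℕ) : tailSum t 0 = 0 := by simp [tailSum, Finsupp.filter_zero]

lemma tailSum_add (t : ℕ) (m m' : ℕ →₀ ℕ) : tailSum t (m + m') = tailSum t m + tailSum t m' := by
  simp [tailSum, Finsupp.filter_add]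

lemma tailSum_single (t j b : ℕ) : tailSum t (single j b) = if t ≤ j then b else 0 := by
  unfold tailSum
  split_ifs with h
  · rw [Finsupp.filter_single_of_pos _ h, Finsupp.degree_single]
  · rw [Finsupp.filter_single_of_neg _ h, map_zero]

lemma tailSum_congr {t : ℕ} {m m' : ℕ →₀ ℕ} (h : ∀ j, t ≤ j → m j = m' j) :
    tailSum t m = tailSum t m' := by
  unfold tailSum
  congr 1
  ext j
  simp only [Finsupp.filter_apply]
  split_ifs with hj
  exacts [h j hj, rfl]

lemma tailSum_eq_zero {t : ℕ} {m : ℕ →₀ ℕ} (h : ∀ j, t ≤ j → m j = 0) : tailSum t m = 0 :=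
  (tailSum_congr h).trans (tailSum_zero_right t)

lemma tailSum_eq_add_tailSum_succ (t : ℕ) (m : ℕ →₀ ℕ) : tailSum t m = m t + tailSum (t+1) m := by
  have : m.filter (t ≤ ·) = single t (m t) + m.filter (t + 1 ≤ ·) := by
    ext j
    simp only [Finsupp.add_apply, Finsupp.filter_apply, Finsupp.single_apply]
    rcases eq_or_ne t j with rfl | hj
    · simp
    · simp only [hj, if_false, zero_add]
      split_ifs <;> omega
  rw [tailSum, this, map_add, Finsupp.degree_single, tailSum]

lemma tailSum_eq_sum_Ico_add {t u : ℕ} (h : t ≤ u) (m : ℕ →₀ ℕ) :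
    tailSum t m = ∑ j ∈ Finset.Ico t u, m j + tailSum u m := by
  induction u, h using Nat.le_induction with
  | base => simp
  | succ u htu ih => rw [ih, Finset.sum_Ico_succ_top htu, tailSum_eq_add_tailSum_succ u, add_assoc]

/-- Domination of all tail sums forces the colexicographic order: at the last index where the
two exponents differ, the tail sums from there on differ by exactly that entry. -/
lemma toColex_le_of_tailSum_le {m c : ℕ →₀ ℕ} (h : ∀ t, tailSum t m ≤ tailSum t c) :
    toColex m ≤ toColex c := by
  by_contra hlt
  obtain ⟨i, hagree, hi⟩ := Finsupp.Colex.lt_iff.mp (not_le.mp hlt)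
  have htail : tailSum (i+1) c = tailSum (i+1) m := tailSum_congr fun j hj => hagree j hj
  have := h i
  rw [tailSum_eq_add_tailSum_succ i m, tailSum_eq_add_tailSum_succ i c, htail] at this
  exact absurd hi (not_lt.mpr (by simpa using this))

lemma Finsupp.exists_last_ne_zero {f : ℕ →₀ ℕ} (hf : f ≠ 0) :
    ∃ L, f L ≠ 0 ∧ ∀ j, L < j → f j = 0 := by
  have hne := Finsupp.support_nonempty_iff.mpr hf
  refine ⟨f.support.max' hne, Finsupp.mem_support_iff.mp (f.support.max'_mem hne),
    fun j hj => Finsupp.notMem_support_iff.mp fun hmem => ?_⟩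
  exact absurd (f.support.le_max' j hmem) (not_le.mpr hj)

end TailSum

section Permutations

variable {w : Equiv.Perm ℕ}

lemma FinSupp.exists_forall_ge_eq (hw : FinSupp w) : ∃ N, ∀ k, N ≤ k → w k = k := by
  obtain ⟨N, hN⟩ := hw.bddAbove
  exact ⟨N + 1, fun k hk => by_contra fun h => absurd (hN h) (by omega)⟩

lemma finSupp_one : FinSupp 1 := by simp [FinSupp]

lemma FinSupp.mul_swap (hw : FinSupp w) (i : ℕ) : FinSupp (w * Equiv.swap i (i+1)) := by
  refine (hw.union (Set.toFinite {i, i+1})).subset fun x hx => ?_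
  by_cases hxi : x = i ∨ x = i + 1
  · right
    rcases hxi with rfl | rfl <;> simp
  · left
    push Not at hxi
    simpa [Equiv.swap_apply_of_ne_of_ne hxi.1 hxi.2] using hx

lemma FinSupp.exists_descent_lt (hw : FinSupp w) : ∃ N, ∀ i, w (i+1) < w i → i < N := by
  obtain ⟨N, hN⟩ := hw.exists_forall_ge_eq
  refine ⟨N, fun i hi => by_contra fun h => ?_⟩
  rw [hN i (by omega), hN (i+1) (by omega)] at hi
  omega

lemma eq_one_of_forall_not_descent (h : ∀ i, ¬ w (i+1) < w i) : w = 1 := by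
  have hmono : StrictMono w := strictMono_nat_of_lt_succ fun n =>
    lt_of_le_of_ne (not_lt.mp (h n)) (w.injective.ne (by omega))
  have := Subsingleton.elim (hmono.orderIsoOfSurjective w w.surjective) (OrderIso.refl ℕ)
  ext n
  exact congrArg (fun e : ℕ ≃o ℕ => e n) this

end Permutations

section LehmerCode

variable {w : Equiv.Perm ℕ} {i : ℕ}

lemma finite_inversions (w : Equiv.Perm ℕ) (j : ℕ) : {k | j < k ∧ w k < w j}.Finite :=
  ((Set.finite_Iio (w j)).preimage w.injective.injOn).subset fun _ hk => hk.2

/-- Junk value `0` when `w` is not finitely supported. -/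
noncomputable def lehmerCode (w : Equiv.Perm ℕ) : ℕ →₀ ℕ :=
  if hw : FinSupp w then
    Finsupp.ofSupportFinite (fun j => {k | j < k ∧ w k < w j}.ncard) (by
      obtain ⟨N, hN⟩ := hw.exists_forall_ge_eq
      refine (Set.finite_Iio N).subset fun j hj => by_contra fun hjN => hj ?_
      rw [Set.mem_Iio, not_lt] at hjN
      convert Set.ncard_empty ℕ
      ext k
      simp only [Set.mem_ofPred_eq, Set.mem_empty_iff_false, iff_false, not_and, not_lt]
      intro hk
      rw [hN k (by omega), hN j hjN]
      omega)
  else 0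

lemma lehmerCode_apply (hw : FinSupp w) (j : ℕ) :
    lehmerCode w j = {k | j < k ∧ w k < w j}.ncard := by
  rw [lehmerCode, dif_pos hw, Finsupp.ofSupportFinite_coe]

lemma lehmerCode_one : lehmerCode 1 = 0 := by
  ext j
  rw [lehmerCode_apply finSupp_one, Finsupp.coe_zero, Pi.zero_apply,
    Set.ncard_eq_zero (finite_inversions 1 j)]
  ext k
  simp only [Equiv.Perm.one_apply, Set.mem_ofPred_eq, Set.mem_empty_iff_false, iff_false]
  omega

lemma lehmerCode_ne_zero_of_descent (hw : FinSupp w) (hd : w (i+1) < w i) :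
    lehmerCode w i ≠ 0 := by
  rw [lehmerCode_apply hw]
  exact ((Set.ncard_pos (finite_inversions w i)).mpr ⟨i+1, by omega, hd⟩).ne'

lemma eq_one_of_lehmerCode_eq_zero (hw : FinSupp w) (h : lehmerCode w = 0) : w = 1 :=
  eq_one_of_forall_not_descent fun _ hd => lehmerCode_ne_zero_of_descent hw hd (by simp [h])

lemma descent_of_lehmerCode_ne_zero (hw : FinSupp w) {L : ℕ} (hL : lehmerCode w L ≠ 0)
    (htop : ∀ j, L < j → lehmerCode w j = 0) : w (L+1) < w L := by
  by_contra hasc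
  rw [lehmerCode_apply hw] at hL
  obtain ⟨k, hLk, hk⟩ := Set.nonempty_of_ncard_ne_zero hL
  have hkL : k ≠ L + 1 := by rintro rfl; exact hasc hk
  -- `k` is then also an inversion of `L + 1`, whose code entry vanishes.
  have hinv : k ∈ {k | L + 1 < k ∧ w k < w (L+1)} := ⟨by omega, by omega⟩
  have := htop (L+1) (by omega)
  rw [lehmerCode_apply hw, Set.ncard_eq_zero (finite_inversions w _)] at this
  rw [this] at hinv
  exact hinv

lemma lehmerCode_mul_swap_self (hw : FinSupp w) (hd : w (i+1) < w i) :
    lehmerCode (w * Equiv.swap i (i+1)) i = lehmerCode w (i+1) := by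
  rw [lehmerCode_apply (hw.mul_swap i), lehmerCode_apply hw]
  congr 1
  ext k
  simp only [Set.mem_ofPred_eq, Equiv.Perm.mul_apply, Equiv.swap_apply_left]
  constructor
  · rintro ⟨hk, hwk⟩
    have hk' : k ≠ i + 1 := by
      rintro rfl
      rw [Equiv.swap_apply_right] at hwk
      omega
    rw [Equiv.swap_apply_of_ne_of_ne (by omega) hk'] at hwk
    exact ⟨by omega, hwk⟩
  · rintro ⟨hk, hwk⟩
    rw [Equiv.swap_apply_of_ne_of_ne (by omega) (by omega)]
    exact ⟨by omega, hwk⟩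

lemma lehmerCode_mul_swap_succ (hw : FinSupp w) (hd : w (i+1) < w i) :
    lehmerCode (w * Equiv.swap i (i+1)) (i+1) = lehmerCode w i - 1 := by
  have hmem : i + 1 ∈ {k | i < k ∧ w k < w i} := ⟨by omega, hd⟩
  rw [lehmerCode_apply (hw.mul_swap i), lehmerCode_apply hw,
    ← Set.ncard_sdiff_singleton_of_mem hmem]
  congr 1
  ext k
  simp only [Set.mem_ofPred_eq, Equiv.Perm.mul_apply, Equiv.swap_apply_right, Set.mem_sdiff,
    Set.mem_singleton_iff]
  constructor
  · rintro ⟨hk, hwk⟩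
    rw [Equiv.swap_apply_of_ne_of_ne (by omega) (by omega)] at hwk
    exact ⟨⟨by omega, hwk⟩, by omega⟩
  · rintro ⟨⟨hk, hwk⟩, hk'⟩
    rw [Equiv.swap_apply_of_ne_of_ne (by omega) (by omega)]
    exact ⟨by omega, hwk⟩

lemma lehmerCode_mul_swap_of_ne (hw : FinSupp w) {j : ℕ} (hji : j ≠ i) (hji' : j ≠ i + 1) :
    lehmerCode (w * Equiv.swap i (i+1)) j = lehmerCode w j := by
  -- the inversions of `w s_i` at `j` are those of `w` moved by `s_i`
  rw [lehmerCode_apply (hw.mul_swap i), lehmerCode_apply hw,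
    ← Set.ncard_preimage_of_injective_subset_range (s := {k | j < k ∧ w k < w j})
      (Equiv.swap i (i+1)).injective (by simp [(Equiv.swap i (i+1)).surjective.range_eq])]
  congr 1
  ext k
  have hjk : j < Equiv.swap i (i+1) k ↔ j < k := by
    rw [Equiv.swap_apply_def]
    split_ifs <;> omega
  simp only [Set.mem_ofPred_eq, Set.mem_preimage, Equiv.Perm.mul_apply,
    Equiv.swap_apply_of_ne_of_ne hji hji', hjk]

lemma lehmerCode_mul_swap (hw : FinSupp w) (hd : w (i+1) < w i) (j : ℕ) :
    lehmerCode (w * Equiv.swap i (i+1)) j =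
      if j = i then lehmerCode w (i+1) else if j = i+1 then lehmerCode w i - 1
      else lehmerCode w j := by
  split_ifs with hji hji'
  · rw [hji, lehmerCode_mul_swap_self hw hd]
  · rw [hji', lehmerCode_mul_swap_succ hw hd]
  · exact lehmerCode_mul_swap_of_ne hw hji hji'

lemma tailSum_lehmerCode_mul_swap (hw : FinSupp w) (hd : w (i+1) < w i) {t : ℕ} (ht : t ≤ i) :
    tailSum t (lehmerCode (w * Equiv.swap i (i+1))) + 1 = tailSum t (lehmerCode w) := by
  have hlow : ∑ j ∈ Finset.Ico t i, lehmerCode (w * Equiv.swap i (i+1)) j =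
      ∑ j ∈ Finset.Ico t i, lehmerCode w j :=
    Finset.sum_congr rfl fun j hj => by
      simp only [Finset.mem_Ico] at hj
      exact lehmerCode_mul_swap_of_ne hw (by omega) (by omega)
  have hhigh : tailSum (i+1+1) (lehmerCode (w * Equiv.swap i (i+1))) =
      tailSum (i+1+1) (lehmerCode w) :=
    tailSum_congr fun j hj => lehmerCode_mul_swap_of_ne hw (by omega) (by omega)
  have hpos := lehmerCode_ne_zero_of_descent hw hd
  rw [tailSum_eq_sum_Ico_add ht, tailSum_eq_sum_Ico_add ht, hlow, tailSum_eq_add_tailSum_succ i,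
    tailSum_eq_add_tailSum_succ (i+1), hhigh, lehmerCode_mul_swap_self hw hd,
    lehmerCode_mul_swap_succ hw hd, tailSum_eq_add_tailSum_succ i (lehmerCode w),
    tailSum_eq_add_tailSum_succ (i+1) (lehmerCode w)]
  omega

@[elab_as_elim]
theorem FinSupp.induction_on_descent {P : Equiv.Perm ℕ → Prop} (w : Equiv.Perm ℕ)
    (hw : FinSupp w) (one : P 1)
    (step : ∀ w, FinSupp w → lehmerCode w ≠ 0 →
      (∀ i, w (i+1) < w i → P (w * Equiv.swap i (i+1))) → P w) : P w := by
  induction hn : tailSum 0 (lehmerCode w) using Nat.strong_induction_on generalizing w with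
  | _ n ih =>
    by_cases h0 : lehmerCode w = 0
    · rw [eq_one_of_lehmerCode_eq_zero hw h0]
      exact one
    · refine step w hw h0 fun i hd => ih _ ?_ _ (hw.mul_swap i) rfl
      have := tailSum_lehmerCode_mul_swap hw hd (Nat.zero_le i)
      omega

lemma lehmerCode_injOn : Set.InjOn lehmerCode {w | FinSupp w} := by
  intro u hu
  refine FinSupp.induction_on_descent (P := fun u => ∀ v, FinSupp v →
    lehmerCode u = lehmerCode v → u = v) u hu ?_ ?_
  · intro v hv h
    exact (eq_one_of_lehmerCode_eq_zero hv (h ▸ lehmerCode_one)).symm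
  · intro u hu hu0 ih v hv h
    obtain ⟨L, hL, htop⟩ := Finsupp.exists_last_ne_zero hu0
    have hdu := descent_of_lehmerCode_ne_zero hu hL htop
    have hdv := descent_of_lehmerCode_ne_zero hv (h ▸ hL) (h ▸ htop)
    have := ih L hdu (v * Equiv.swap L (L+1)) (hv.mul_swap L) (by
      ext j
      rw [lehmerCode_mul_swap hu hdu, lehmerCode_mul_swap hv hdv, h])
    exact mul_right_cancel this

lemma lehmerCode_mul_swap_of_ascent (hw : FinSupp w) (ha : w i < w (i+1)) (j : ℕ) :
    lehmerCode (w * Equiv.swap i (i+1)) j =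
      if j = i then lehmerCode w (i+1) + 1 else if j = i+1 then lehmerCode w i
      else lehmerCode w j := by
  set v := w * Equiv.swap i (i+1) with hv_def
  have hv : FinSupp v := hw.mul_swap i
  have hvw : v * Equiv.swap i (i+1) = w := by rw [hv_def, mul_assoc, Equiv.swap_mul_self, mul_one]
  have hd : v (i+1) < v i := by simpa [hv_def] using ha
  have hpos := lehmerCode_ne_zero_of_descent hv hd
  split_ifs with hji hji'
  · have := lehmerCode_mul_swap_succ hv hd
    rw [hvw] at this
    rw [hji]
    omega
  · rw [hji', ← lehmerCode_mul_swap_self hv hd, hvw]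
  · rw [← lehmerCode_mul_swap_of_ne hv hji hji', hvw]

lemma exists_lehmerCode_eq (c : ℕ →₀ ℕ) : ∃ w, FinSupp w ∧ lehmerCode w = c := by
  induction hn : tailSum 0 c using Nat.strong_induction_on generalizing c with
  | _ n ih =>
    by_cases hc : c = 0
    · exact ⟨1, finSupp_one, hc ▸ lehmerCode_one⟩
    obtain ⟨L, hL, htop⟩ := Finsupp.exists_last_ne_zero hc
    -- `w = v s_L`, where the code of `v` has the last entry `c L` lowered by one and moved to
    -- `L + 1`
    set c' := c.erase L + single (L+1) (c L - 1)
    have hdeg : tailSum 0 c' + 1 = tailSum 0 c := by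
      conv_rhs => rw [← Finsupp.erase_add_single L c]
      simp only [c', tailSum_add, tailSum_single, if_pos (Nat.zero_le _)]
      omega
    obtain ⟨v, hv, hvc⟩ := ih _ (by omega) c' rfl
    have hasc : v L < v (L+1) :=
      lt_of_le_of_ne (not_lt.mp fun hd => lehmerCode_ne_zero_of_descent hv hd (by simp [hvc, c']))
        (v.injective.ne (by omega))
    refine ⟨v * Equiv.swap L (L+1), hv.mul_swap L, Finsupp.ext fun j => ?_⟩
    rw [lehmerCode_mul_swap_of_ascent hv hasc, hvc]
    split_ifs with hjL hjL1
    · simp only [c', hjL, Finsupp.coe_add, Pi.add_apply, Finsupp.erase_ne (by omega : L + 1 ≠ L),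
        htop (L+1) (by omega), Finsupp.single_eq_same]
      omega
    · simp [c', hjL1, htop (L+1) (by omega)]
    · simp [c', hjL, Finsupp.single_eq_of_ne hjL1]

end LehmerCode

section SchubertFamily

variable {S : Equiv.Perm ℕ → Pol} (hS : IsSchubertFamily S) {w : Equiv.Perm ℕ}
include hS

lemma IsSchubertFamily.mem_supported (hw : FinSupp w) {d : ℕ}
    (hd : ∀ i, w (i+1) < w i → i < d) : S w ∈ supported ℤ (Set.Iio d) :=
  mem_supported_of_swapVar_eq_self fun i hi => swapVar_eq_self_of_ddiff_eq_zero (by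
    rw [hS.2.2 w hw i, if_neg fun h => absurd (hd i h) (by omega)])

lemma IsSchubertFamily.coeff_add_single_eq_sum (hw : FinSupp w) {N : ℕ}
    (hN : ∀ i, w (i+1) < w i → i < N) {m₀ : ℕ →₀ ℕ} {L : ℕ} (hm₀ : ∀ j, L ≤ j → m₀ j = 0)
    (a : ℕ) :
    coeff (m₀ + single L (a+1)) (S w) = ∑ t ∈ Finset.range N,
      if w (L+t+1) < w (L+t) then coeff (m₀ + single (L+t) a) (S (w * Equiv.swap (L+t) (L+t+1)))
      else 0 := by
  rw [coeff_eq_sum_coeff_sub_swapVar (hS.mem_supported hw hN) hm₀ (by omega : a + 1 ≠ 0)]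
  refine Finset.sum_congr rfl fun t _ => ?_
  rw [← X_sub_X_succ_mul_ddiff, hS.2.2 w hw]
  split_ifs
  · rw [Finsupp.single_add, ← add_assoc]
    exact coeff_add_single_X_sub_X_succ_mul (by simp [hm₀ (L+t+1) (by omega)]) _
  · simp

theorem IsSchubertFamily.tailSum_le_of_mem_support (hw : FinSupp w) :
    ∀ m ∈ (S w).support, ∀ t, tailSum t m ≤ tailSum t (lehmerCode w) := by
  refine FinSupp.induction_on_descent (P := fun w => ∀ m ∈ (S w).support, ∀ t,
    tailSum t m ≤ tailSum t (lehmerCode w)) w hw ?_ ?_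
  · intro m hm t
    rw [hS.2.1, mem_support_iff, coeff_one] at hm
    simp [(ite_ne_right_iff.mp hm).1.symm]
  · intro w hw _ ih m hm t
    by_cases hm0 : m = 0
    · simp [hm0]
    obtain ⟨L, hL, htop⟩ := Finsupp.exists_last_ne_zero hm0
    obtain ⟨a, ha⟩ := Nat.exists_eq_add_one_of_ne_zero hL
    obtain ⟨N, hN⟩ := hw.exists_descent_lt
    have hm₀ : ∀ j, L ≤ j → m.erase L j = 0 := fun j hj => by
      rcases eq_or_ne j L with rfl | hjL
      · simp
      · simp [hjL, htop j (by omega)]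
    have hmL : m = m.erase L + single L (a+1) := by rw [← ha, Finsupp.erase_add_single]
    have hcoeff := mem_support_iff.mp hm
    rw [hmL, hS.coeff_add_single_eq_sum hw hN hm₀] at hcoeff
    -- some term of the expansion survives: a descent at `L + t₀` whose Schubert polynomial
    -- contains the block moved there and lowered by one
    obtain ⟨t₀, -, ht₀⟩ := Finset.exists_ne_zero_of_sum_ne_zero hcoeff
    split_ifs at ht₀ with hd
    · rcases le_or_gt t L with htL | htL
      · have hle := ih _ hd _ (mem_support_iff.mpr ht₀) t
        have htail := tailSum_lehmerCode_mul_swap hw hd (by omega : t ≤ L + t₀)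
        rw [hmL, tailSum_add, tailSum_single, if_pos htL]
        rw [tailSum_add, tailSum_single, if_pos (by omega)] at hle
        omega
      · rw [tailSum_eq_zero fun j hj => htop j (by omega)]
        exact Nat.zero_le _
    · exact absurd rfl ht₀

lemma IsSchubertFamily.coeff_erase_add_single_eq (hw : FinSupp w) {L s : ℕ} (hsL : s ≤ L)
    (hzero : ∀ j, s ≤ j → j ≠ L → lehmerCode w j = 0) (hL : lehmerCode w L ≠ 0) :
    coeff ((lehmerCode w).erase L + single s (lehmerCode w L)) (S w) =
      coeff ((lehmerCode (w * Equiv.swap L (L+1))).erase (L+1) +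
        single L (lehmerCode (w * Equiv.swap L (L+1)) (L+1))) (S (w * Equiv.swap L (L+1))) := by
  have hd := descent_of_lehmerCode_ne_zero hw hL fun j hj => hzero j (by omega) (by omega)
  obtain ⟨a, ha⟩ := Nat.exists_eq_add_one_of_ne_zero hL
  obtain ⟨N, hN⟩ := hw.exists_descent_lt
  have hm₀ : ∀ j, s ≤ j → (lehmerCode w).erase L j = 0 := fun j hj => by
    rcases eq_or_ne j L with rfl | hjL
    · simp
    · simp [hjL, hzero j hj hjL]
  -- the code vanishes on `[s, ∞)` off `L`, so only the descent at `L` contributes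
  rw [ha, hS.coeff_add_single_eq_sum hw hN hm₀, Finset.sum_eq_single (L - s)]
  · have hL1 : lehmerCode w (L+1) = 0 := hzero (L+1) (by omega) (by omega)
    rw [Nat.add_sub_cancel' hsL, if_pos hd]
    congr 1
    ext j
    rcases eq_or_ne j L with rfl | hjL
    · simp [lehmerCode_mul_swap_self hw hd, lehmerCode_mul_swap_succ hw hd, hL1, ha]
    rcases eq_or_ne j (L+1) with rfl | hjL1
    · simp [hL1, lehmerCode_mul_swap_succ hw hd, ha]
    · simp [lehmerCode_mul_swap_of_ne hw hjL hjL1, hjL, hjL1, Finsupp.single_eq_of_ne hjL,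
        lehmerCode_mul_swap_succ hw hd, ha]
  · intro t _ ht
    rw [if_neg fun hdt => lehmerCode_ne_zero_of_descent hw hdt (hzero _ (by omega) (by omega))]
  · intro h
    exact absurd (Finset.mem_range.mpr (by have := hN L hd; omega)) h

/-- Stated for the code with its last block moved left over zero entries, since the induction
step lands on such exponents. -/
theorem IsSchubertFamily.coeff_erase_add_single_lehmerCode (hw : FinSupp w) :
    ∀ L s, s ≤ L → (∀ j, s ≤ j → j ≠ L → lehmerCode w j = 0) →
      coeff ((lehmerCode w).erase L + single s (lehmerCode w L)) (S w) = 1 := by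
  refine FinSupp.induction_on_descent (P := fun w => ∀ L s, s ≤ L →
    (∀ j, s ≤ j → j ≠ L → lehmerCode w j = 0) →
      coeff ((lehmerCode w).erase L + single s (lehmerCode w L)) (S w) = 1) w hw ?_ ?_
  · intro L s _ _
    simp [lehmerCode_one, hS.2.1]
  intro w hw hc0 ih
  have key : ∀ L s, s ≤ L → (∀ j, s ≤ j → j ≠ L → lehmerCode w j = 0) → lehmerCode w L ≠ 0 →
      coeff ((lehmerCode w).erase L + single s (lehmerCode w L)) (S w) = 1 := by
    intro L s hsL hzero hL
    have hd := descent_of_lehmerCode_ne_zero hw hL fun j hj => hzero j (by omega) (by omega)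
    rw [hS.coeff_erase_add_single_eq hw hsL hzero hL]
    refine ih L hd (L+1) L (by omega) fun j hj hj' => ?_
    rcases eq_or_ne j L with rfl | hjL
    · rw [lehmerCode_mul_swap_self hw hd]
      exact hzero (j+1) (by omega) (by omega)
    · rw [lehmerCode_mul_swap_of_ne hw hjL hj']
      exact hzero j (by omega) hjL
  intro L s hsL hzero
  by_cases hL : lehmerCode w L = 0
  · obtain ⟨L₀, hL₀, htop⟩ := Finsupp.exists_last_ne_zero hc0
    have := key L₀ L₀ le_rfl (fun j hj hj' => htop j (by omega)) hL₀
    rw [Finsupp.erase_add_single] at this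
    rwa [hL, Finsupp.single_zero, add_zero,
      Finsupp.erase_of_notMem_support (Finsupp.notMem_support_iff.mpr hL)]
  · exact key L s hsL hzero hL

theorem IsSchubertFamily.coeff_lehmerCode (hw : FinSupp w) :
    coeff (lehmerCode w) (S w) = 1 := by
  set N := (lehmerCode w).support.sup id
  have := hS.coeff_erase_add_single_lehmerCode hw N N le_rfl fun j hj hjN =>
    Finsupp.notMem_support_iff.mp fun hmem =>
      hjN (le_antisymm (Finset.le_sup (f := id) hmem) hj)
  rwa [Finsupp.erase_add_single] at this

end SchubertFamily

section Basis

variable {S : Equiv.Perm ℕ → Pol} (hS : IsSchubertFamily S)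
include hS

theorem IsSchubertFamily.linearIndepOn : LinearIndepOn ℤ S {w | FinSupp w} := by
  rw [linearIndepOn_iff]
  intro l hl hsum
  by_contra hne
  -- the colexicographically largest code occurring in `l` survives in the sum
  obtain ⟨w, hw, hmax⟩ := l.support.exists_max_image (fun v => toColex (lehmerCode v))
    (Finsupp.support_nonempty_iff.mpr hne)
  have hFS : ∀ v ∈ l.support, FinSupp v := fun v hv => hl hv
  have hcoeff := congrArg (coeff (lehmerCode w)) hsum
  rw [Finsupp.linearCombination_apply, Finsupp.sum, coeff_sum, Finset.sum_eq_single w, coeff_smul,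
    hS.coeff_lehmerCode (hFS w hw), smul_eq_mul, mul_one, coeff_zero] at hcoeff
  · exact Finsupp.mem_support_iff.mp hw hcoeff
  · intro v hv hvw
    rw [coeff_smul]
    by_contra hc
    have hmem : lehmerCode w ∈ (S v).support := mem_support_iff.mpr (right_ne_zero_of_smul hc)
    have hle := toColex_le_of_tailSum_le (hS.tailSum_le_of_mem_support (hFS v hv) _ hmem)
    exact hvw (lehmerCode_injOn (hFS v hv) (hFS w hw)
      (toColex.injective (le_antisymm (hmax v hv) hle)))
  · exact fun h => absurd hw h

theorem IsSchubertFamily.monomial_mem_span (d : ℕ) (m : ℕ →₀ ℕ) (hm : ∀ j, d ≤ j → m j = 0) :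
    monomial m 1 ∈ Submodule.span ℤ (S '' {w | FinSupp w ∧ ∀ i, w (i+1) < w i → i < d}) := by
  set V := Submodule.span ℤ (S '' {w | FinSupp w ∧ ∀ i, w (i+1) < w i → i < d})
  induction hc : toColex m using WellFoundedLT.induction generalizing m with
  | _ c ih =>
    obtain ⟨w, hw, rfl⟩ := exists_lehmerCode_eq m
    have hdesc : ∀ i, w (i+1) < w i → i < d := fun i hi =>
      by_contra fun h => lehmerCode_ne_zero_of_descent hw hi (hm i (by omega))
    have hone := hS.coeff_lehmerCode hw
    have hsplit : monomial (lehmerCode w) 1 = S w -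
        ∑ μ ∈ (S w).support.erase (lehmerCode w), coeff μ (S w) • monomial μ 1 := by
      rw [eq_sub_iff_add_eq]
      conv_rhs => rw [(S w).as_sum, ← Finset.add_sum_erase _ _ (mem_support_iff.mpr
        (by rw [hone]; exact one_ne_zero))]
      simp [hone, smul_monomial]
    rw [hsplit]
    refine V.sub_mem (Submodule.subset_span ⟨w, ⟨hw, hdesc⟩, rfl⟩)
      (V.sum_mem fun μ hμ => V.smul_mem _ (ih _ ?_ μ ?_ rfl))
    · exact hc ▸ lt_of_le_of_ne (toColex_le_of_tailSum_le
        (hS.tailSum_le_of_mem_support hw μ (Finset.mem_of_mem_erase hμ)))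
        (toColex.injective.ne (Finset.ne_of_mem_erase hμ))
    · exact fun j hj => eq_zero_of_mem_support_of_mem_supported (hS.mem_supported hw hdesc)
        (Finset.mem_of_mem_erase hμ) hj

theorem IsSchubertFamily.span_eq_supported (d : ℕ) :
    Submodule.span ℤ (S '' {w | FinSupp w ∧ ∀ i, w (i+1) < w i → i < d}) =
      Subalgebra.toSubmodule (supported ℤ (Set.Iio d)) := by
  refine le_antisymm ?_ fun p hp => ?_
  · rw [Submodule.span_le]
    rintro _ ⟨w, ⟨hw, hd⟩, rfl⟩
    exact hS.mem_supported hw hd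
  · rw [p.as_sum]
    refine Submodule.sum_mem _ fun μ hμ => ?_
    rw [← mul_one (coeff μ p), ← smul_eq_mul, ← smul_monomial]
    exact Submodule.smul_mem _ _ (hS.monomial_mem_span d μ fun j hj =>
      eq_zero_of_mem_support_of_mem_supported hp hμ hj)

theorem IsSchubertFamily.span_eq_top : Submodule.span ℤ (S '' {w | FinSupp w}) = ⊤ := by
  refine eq_top_iff.mpr fun p _ => ?_
  have hp : p ∈ supported ℤ (Set.Iio (p.vars.sup id + 1)) :=
    MvPolynomial.mem_supported.mpr fun i hi => Nat.lt_succ_of_le (Finset.le_sup (f := id) hi)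
  rw [← Subalgebra.mem_toSubmodule, ← hS.span_eq_supported] at hp
  exact Submodule.span_mono (Set.image_mono fun w hw => hw.1) hp

end Basis

/-- Schubert polynomials form a ℤ-basis of `Pol`, and those with descent
set contained in `{1,…,d}` (paper indexing) form a ℤ-basis of `ℤ[x₁,…,x_d]`. -/
theorem stmt_5 (S : Equiv.Perm ℕ → Pol) (hS : IsSchubertFamily S) :
    (LinearIndependent ℤ (fun w : {w : Equiv.Perm ℕ // FinSupp w} => S w.1) ∧
      Submodule.span ℤ (Set.range (fun w : {w : Equiv.Perm ℕ // FinSupp w} => S w.1)) = ⊤) ∧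
    ∀ d : ℕ,
      LinearIndependent ℤ
        (fun w : {w : Equiv.Perm ℕ // FinSupp w ∧ ∀ i : ℕ, w (i+1) < w i → i < d} =>
          S w.1) ∧
      Submodule.span ℤ
        (Set.range (fun w : {w : Equiv.Perm ℕ // FinSupp w ∧ ∀ i : ℕ, w (i+1) < w i → i < d} =>
          S w.1)) =
      Subalgebra.toSubmodule (supported ℤ (Set.Iio d)) := by
  refine ⟨⟨hS.linearIndepOn, ?_⟩, fun d => ⟨hS.linearIndepOn.mono fun w hw => hw.1, ?_⟩⟩
  · have h := hS.span_eq_top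
    rw [Set.image_eq_range] at h
    exact h
  · have h := hS.span_eq_supported d
    rw [Set.image_eq_range] at h
    exact h
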